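/- arXiv:2412.10213 — 2 statements merged into one kernel-verified Lean document; each statement's English description precedes it below -/
import Mathlib

section
/- Best-case covariate-balanced design: suppose σ_1 = … = σ_K = σ > 0 and τ² = bσ² with b > 0, the allocations x_1,…,x_K ∈ {−1,1}^N satisfy Zᵀ x_j = 0 for every j and x_jᵀ x_{j'} = 0 for every j ≠ j'. Then the precision matrix satisfies P(β̂) = (N(1+b(K−1))/(σ²(1+bK))) · I_K, and consequently det(P(β̂)) = ((N/σ²)·(1+b(K−1))/(1+bK))^K. -/
open Matrix Finset

/-! Balance (`Zᵀ x_j = 0`) makes the projection `P_{Z⊥}` fix every allocation, so the entries of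
`P(β̂)` only see the Gram matrix `x_jᵀ x_{j'}`, which orthogonality and the `±1` entries turn into
`N • 1`. With equal variances every diagonal weight `Q_j / c` is the same scalar, and
`c = 1 + bK` identifies it. -/

theorem Matrix.one_sub_mul_mul_transpose_mulVec_of_transpose_mulVec_eq_zero
    {m n R : Type*} [Fintype m] [Fintype n] [DecidableEq m] [CommRing R]
    (Z : Matrix m n R) (M : Matrix n n R) {v : m → R} (hv : Zᵀ *ᵥ v = 0) :
    (1 - Z * M * Zᵀ) *ᵥ v = v := by
  rw [sub_mulVec, one_mulVec, ← mulVec_mulVec, hv, mulVec_zero, sub_zero]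

theorem Matrix.dotProduct_self_eq_card_of_forall_eq_one_or_eq_neg_one
    {n R : Type*} [Fintype n] [Ring R] {v : n → R} (hv : ∀ i, v i = 1 ∨ v i = -1) :
    v ⬝ᵥ v = Fintype.card n := by
  have hsq : ∀ i, v i * v i = 1 := fun i => by rcases hv i with h | h <;> simp [h]
  simp [dotProduct, hsq]

theorem Matrix.dotProduct_eq_ite_of_pairwise_orthogonal
    {ι n R : Type*} [Fintype n] [DecidableEq ι] [Ring R] {x : ι → n → R}
    (hx : ∀ j i, x j i = 1 ∨ x j i = -1) (horth : ∀ j j', j ≠ j' → x j ⬝ᵥ x j' = 0) (j j' : ι) :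
    x j ⬝ᵥ x j' = if j = j' then (Fintype.card n : R) else 0 := by
  split_ifs with h
  · exact h ▸ dotProduct_self_eq_card_of_forall_eq_one_or_eq_neg_one (hx j)
  · exact horth j j' h

theorem statement_7_general (N K p : ℕ)
    (σ b : ℝ) (hσ : 0 < σ)
    (τsq : ℝ) (hτ : τsq = b * σ ^ 2)
    (σsq : Fin K → ℝ) (hσsq : ∀ j, σsq j = σ ^ 2)
    (Z : Matrix (Fin N) (Fin p) ℝ)
    (x : Fin K → Fin N → ℝ) (hx : ∀ j i, x j i = 1 ∨ x j i = -1)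
    (hbal : ∀ j, Zᵀ *ᵥ x j = 0)
    (horth : ∀ j j' : Fin K, j ≠ j' → x j ⬝ᵥ x j' = 0)
    (c : ℝ) (hc : c = 1 + τsq * ∑ ℓ, (σsq ℓ)⁻¹)
    (Q : Fin K → ℝ) (hQ : ∀ j, Q j = (σsq j)⁻¹ * (c - τsq * (σsq j)⁻¹))
    (R : Fin K → Fin K → ℝ)
    (P : Matrix (Fin K) (Fin K) ℝ)
    (hP : ∀ j j', P j j' = (1 / c) * (if j = j' then Q j else R j j') *
      (x j ⬝ᵥ ((1 - Z * (Zᵀ * Z)⁻¹ * Zᵀ) *ᵥ x j'))) :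
    P = ((N : ℝ) * (1 + b * ((K : ℝ) - 1)) / (σ ^ 2 * (1 + b * K))) •
      (1 : Matrix (Fin K) (Fin K) ℝ) ∧
    P.det = (((N : ℝ) / σ ^ 2) * ((1 + b * ((K : ℝ) - 1)) / (1 + b * K))) ^ K := by
  have hσ2 : σ ^ 2 ≠ 0 := by positivity
  have hc' : c = 1 + b * K := by
    simp only [hc, hτ, hσsq, sum_const, card_univ, Fintype.card_fin, nsmul_eq_mul]
    field_simp
  have hdiag : ∀ j, 1 / c * Q j * N = N * (1 + b * ((K : ℝ) - 1)) / (σ ^ 2 * (1 + b * K)) := by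
    intro j
    rw [hQ, hσsq, hτ, hc']
    field_simp
    ring
  have hPeq : P = ((N : ℝ) * (1 + b * ((K : ℝ) - 1)) / (σ ^ 2 * (1 + b * K))) • 1 := by
    ext j j'
    rw [hP, one_sub_mul_mul_transpose_mulVec_of_transpose_mulVec_eq_zero _ _ (hbal j'),
      dotProduct_eq_ite_of_pairwise_orthogonal hx horth, Fintype.card_fin]
    by_cases h : j = j'
    · subst h
      rw [if_pos rfl, if_pos rfl, hdiag, Matrix.smul_apply, one_apply_eq, smul_eq_mul, mul_one]
    · simp [h]
  refine ⟨hPeq, ?_⟩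
  rw [hPeq, det_smul, det_one, mul_one, Fintype.card_fin, div_mul_div_comm]

/-- Best-case covariate-balanced design. If `σ_j² = σ²` for all `j`,
`τ² = bσ²` with `b > 0`, the allocations `x_j ∈ {−1,1}^N` balance covariates
(`Zᵀ x_j = 0`) and are mutually orthogonal (`x_jᵀ x_{j'} = 0` for `j ≠ j'`), then
`P(β̂) = (N(1+b(K−1))/(σ²(1+bK))) I_K` and
`det P(β̂) = ((N/σ²)·(1+b(K−1))/(1+bK))^K`. -/
theorem statement_7 (N K p : ℕ) (hN : 1 ≤ N) (hK : 1 ≤ K)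
    (σ b : ℝ) (hσ : 0 < σ) (hb : 0 < b)
    (τsq : ℝ) (hτ : τsq = b * σ ^ 2)
    (σsq : Fin K → ℝ) (hσsq : ∀ j, σsq j = σ ^ 2)
    (Z : Matrix (Fin N) (Fin p) ℝ) (hZ : IsUnit (Zᵀ * Z).det)
    (x : Fin K → Fin N → ℝ) (hx : ∀ j i, x j i = 1 ∨ x j i = -1)
    (hbal : ∀ j, Zᵀ *ᵥ x j = 0)
    (horth : ∀ j j' : Fin K, j ≠ j' → x j ⬝ᵥ x j' = 0)
    (c : ℝ) (hc : c = 1 + τsq * ∑ ℓ, (σsq ℓ)⁻¹)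
    (Q : Fin K → ℝ) (hQ : ∀ j, Q j = (σsq j)⁻¹ * (c - τsq * (σsq j)⁻¹))
    (R : Fin K → Fin K → ℝ) (hR : ∀ j j', R j j' = -(τsq * (σsq j)⁻¹ * (σsq j')⁻¹))
    (P : Matrix (Fin K) (Fin K) ℝ)
    (hP : ∀ j j', P j j' = (1 / c) * (if j = j' then Q j else R j j') *
      (x j ⬝ᵥ ((1 - Z * (Zᵀ * Z)⁻¹ * Zᵀ) *ᵥ x j'))) :
    P = ((N : ℝ) * (1 + b * ((K : ℝ) - 1)) / (σ ^ 2 * (1 + b * K))) •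
      (1 : Matrix (Fin K) (Fin K) ℝ) ∧
    P.det = (((N : ℝ) / σ ^ 2) * ((1 + b * ((K : ℝ) - 1)) / (1 + b * K))) ^ K :=
  statement_7_general N K p σ b hσ τsq hτ σsq hσsq Z x hx hbal horth c hc Q hQ R P hP
end

section
/- Suppose σ_1 = … = σ_K = σ > 0 and τ² = bσ² with b > 0, and the allocations x_1, …, x_K ∈ {−1,1}^N are covariate balancing, i.e. Zᵀ x_j = 0 for every j. Then the determinant of the precision matrix factorizes as det(P(β̂)) = (N/σ²)^K · det( I_N − (b/((1+bK)N)) Σ_{j=1}^K x_j x_jᵀ ). -/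
open Matrix Finset

/-!
Covariate balance makes the residual projection `1 - Z (ZᵀZ)⁻¹ Zᵀ` act as the identity on every
allocation, and `xᵢ ∈ {±1}` gives `x_j ⬝ x_j = N`. With equal variances the precision matrix is
therefore `(N/σ²) (I_K - a X Xᵀ)`, where `X` is the `K × N` matrix with rows `x_j` and
`a = b/((1+bK)N)`. Sylvester's identity `det (I_K - a X Xᵀ) = det (I_N - a Xᵀ X)` and
`Xᵀ X = ∑ⱼ x_j x_jᵀ` finish the proof.
-/

namespace Matrix

variable {m n R : Type*}

theorem sum_vecMulVec_eq_transpose_mul [Fintype m] [NonUnitalNonAssocSemiring R]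
    (x y : m → n → R) : ∑ j, vecMulVec (x j) (y j) = (of x)ᵀ * of y := by
  ext i k
  simp only [sum_apply, vecMulVec_apply, mul_apply, transpose_apply, of_apply]

theorem mulVec_one_sub_mul_eq_self [Fintype m] [Fintype n] [Ring R] [DecidableEq n]
    {A : Matrix n m R} {B : Matrix m n R} {v : n → R} (hv : B *ᵥ v = 0) :
    (1 - A * B) *ᵥ v = v := by
  rw [sub_mulVec, one_mulVec, ← mulVec_mulVec, hv, mulVec_zero, sub_zero]

theorem dotProduct_self_eq_card_of_sign [Fintype n] [Ring R] {v : n → R}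
    (hv : ∀ i, v i = 1 ∨ v i = -1) : v ⬝ᵥ v = Fintype.card n := by
  have hsq : ∀ i, v i * v i = 1 := fun i => by rcases hv i with h | h <;> simp [h]
  simp [dotProduct, hsq]

theorem det_one_sub_smul_transpose_mul_comm [Fintype m] [Fintype n] [CommRing R]
    [DecidableEq m] [DecidableEq n] (a : R) (X : Matrix m n R) :
    det (1 - a • (Xᵀ * X)) = det (1 - a • (X * Xᵀ)) := by
  rw [← smul_mul, det_one_sub_mul_comm, Matrix.mul_smul]

end Matrix

theorem statement_17_general (N K p : ℕ) (hN : 1 ≤ N)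
    (σ b : ℝ) (hσ : 0 < σ) (hb : 0 < b)
    (τsq : ℝ) (hτ : τsq = b * σ ^ 2)
    (σsq : Fin K → ℝ) (hσsq : ∀ j, σsq j = σ ^ 2)
    (Z : Matrix (Fin N) (Fin p) ℝ)
    (x : Fin K → Fin N → ℝ) (hx : ∀ j i, x j i = 1 ∨ x j i = -1)
    (hbal : ∀ j, Zᵀ *ᵥ x j = 0)
    (c : ℝ) (hc : c = 1 + τsq * ∑ ℓ, (σsq ℓ)⁻¹)
    (Q : Fin K → ℝ) (hQ : ∀ j, Q j = (σsq j)⁻¹ * (c - τsq * (σsq j)⁻¹))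
    (R : Fin K → Fin K → ℝ) (hR : ∀ j j', R j j' = -(τsq * (σsq j)⁻¹ * (σsq j')⁻¹))
    (P : Matrix (Fin K) (Fin K) ℝ)
    (hP : ∀ j j', P j j' = (1 / c) * (if j = j' then Q j else R j j') *
      (x j ⬝ᵥ ((1 - Z * (Zᵀ * Z)⁻¹ * Zᵀ) *ᵥ x j'))) :
    P.det = ((N : ℝ) / σ ^ 2) ^ K *
      ((1 : Matrix (Fin N) (Fin N) ℝ) -
        (b / ((1 + b * K) * N)) • ∑ j : Fin K, vecMulVec (x j) (x j)).det := by
  have hσ2 : σ ^ 2 ≠ 0 := by positivity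
  have hN0 : (N : ℝ) ≠ 0 := Nat.cast_ne_zero.mpr (by omega)
  have hc_eq : c = 1 + b * K := by
    simp only [hc, hτ, hσsq, sum_const, card_univ, Fintype.card_fin, nsmul_eq_mul]
    field_simp
  have hc0 : 1 + b * K ≠ 0 := by positivity
  have hPeq : P = ((N : ℝ) / σ ^ 2) •
      (1 - (b / ((1 + b * K) * N)) • (of x * (of x)ᵀ)) := by
    ext j j'
    have hgram : (of x * (of x)ᵀ) j j' = x j ⬝ᵥ x j' := rfl
    rw [hP, mulVec_one_sub_mul_eq_self (hbal j')]
    simp only [Matrix.smul_apply, Matrix.sub_apply, smul_eq_mul, hgram, one_apply]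
    split_ifs with hjj
    · subst hjj
      rw [dotProduct_self_eq_card_of_sign (hx j), Fintype.card_fin, hQ, hσsq, hτ, hc_eq]
      field_simp
    · rw [hR, hσsq, hσsq, hτ, hc_eq]
      field_simp
      ring
  rw [hPeq, det_smul, Fintype.card_fin, sum_vecMulVec_eq_transpose_mul,
    det_one_sub_smul_transpose_mul_comm]

/-- If `σ_j² = σ²` for all `j`, `τ² = bσ²` with `b > 0`, and the allocations
`x_1,…,x_K ∈ {−1,1}^N` are covariate balancing (`Zᵀ x_j = 0`), then the determinant of the
precision matrix factorizes as
`det P(β̂) = (N/σ²)^K · det(I_N − (b/((1+bK)N)) Σ_j x_j x_jᵀ)`. -/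
theorem statement_17 (N K p : ℕ) (hN : 1 ≤ N) (hK : 1 ≤ K)
    (σ b : ℝ) (hσ : 0 < σ) (hb : 0 < b)
    (τsq : ℝ) (hτ : τsq = b * σ ^ 2)
    (σsq : Fin K → ℝ) (hσsq : ∀ j, σsq j = σ ^ 2)
    (Z : Matrix (Fin N) (Fin p) ℝ) (hZ : IsUnit (Zᵀ * Z).det)
    (x : Fin K → Fin N → ℝ) (hx : ∀ j i, x j i = 1 ∨ x j i = -1)
    (hbal : ∀ j, Zᵀ *ᵥ x j = 0)
    (c : ℝ) (hc : c = 1 + τsq * ∑ ℓ, (σsq ℓ)⁻¹)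
    (Q : Fin K → ℝ) (hQ : ∀ j, Q j = (σsq j)⁻¹ * (c - τsq * (σsq j)⁻¹))
    (R : Fin K → Fin K → ℝ) (hR : ∀ j j', R j j' = -(τsq * (σsq j)⁻¹ * (σsq j')⁻¹))
    (P : Matrix (Fin K) (Fin K) ℝ)
    (hP : ∀ j j', P j j' = (1 / c) * (if j = j' then Q j else R j j') *
      (x j ⬝ᵥ ((1 - Z * (Zᵀ * Z)⁻¹ * Zᵀ) *ᵥ x j'))) :
    P.det = ((N : ℝ) / σ ^ 2) ^ K *
      ((1 : Matrix (Fin N) (Fin N) ℝ) -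
        (b / ((1 + b * K) * N)) • ∑ j : Fin K, vecMulVec (x j) (x j)).det :=
  statement_17_general N K p hN σ b hσ hb τsq hτ σsq hσsq Z x hx hbal c hc Q hQ R hR P hP
end
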